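/- arXiv:2005.09725 — 2 statements merged into one kernel-verified Lean document; each statement's English description precedes it below -/
import Mathlib

section
/- Scaling property of second-order TGV: let r > 0 and set Ω_r := r⁻¹Ω = { x ∈ ℝ^d : r x ∈ Ω }. For every locally integrable u : Ω → ℝ, the rescaled function ρ_r u : Ω_r → ℝ, (ρ_r u)(x) := u(r x), satisfies TGV²_{(α₀,α₁)}(ρ_r u) (computed on the domain Ω_r) = r^{−d} · TGV²_{(α₀ r², α₁ r)}(u) (computed on the domain Ω). -/
open MeasureTheory Filter Topology
open scoped ENNReal

noncomputable section

/-- Partial derivative `∂f/∂x_j` of a scalar function on `ℝ^d`. -/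
def pd {d : ℕ} (j : Fin d) (f : (Fin d → ℝ) → ℝ) (x : Fin d → ℝ) : ℝ :=
  fderiv ℝ f x (Pi.single j 1)

/-- Divergence of a matrix field: `(div v)_i = ∑_j ∂v_ij/∂x_j`. -/
def mdiv {d : ℕ} (v : (Fin d → ℝ) → Fin d → Fin d → ℝ) (x : Fin d → ℝ) (i : Fin d) : ℝ :=
  ∑ j, pd j (fun y => v y i j) x

/-- Second divergence `div² v = ∑_{i,j} ∂²v_ij/∂x_i∂x_j`. -/
def mdiv2 {d : ℕ} (v : (Fin d → ℝ) → Fin d → Fin d → ℝ) (x : Fin d → ℝ) : ℝ :=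
  ∑ i, ∑ j, pd i (pd j (fun y => v y i j)) x

/-- Euclidean norm of a vector in `ℝ^d`. -/
def enorm2 {d : ℕ} (w : Fin d → ℝ) : ℝ := Real.sqrt (∑ i, (w i) ^ 2)

/-- Frobenius-type norm of a symmetric matrix: `(∑_i |M_ii|² + 2 ∑_{i<j} |M_ij|²)^(1/2)`. -/
def fnorm2 {d : ℕ} (M : Fin d → Fin d → ℝ) : ℝ :=
  Real.sqrt ((∑ i, (M i i) ^ 2) + 2 * ∑ i, ∑ j, if i < j then (M i j) ^ 2 else 0)

/-- Admissible test fields for second-order TGV: `v ∈ C_c²(Ω, S^{d×d})`,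
`‖v‖_∞ ≤ α₀`, `‖div v‖_∞ ≤ α₁`. -/
def TGVtest {d : ℕ} (Ω : Set (Fin d → ℝ)) (α₀ α₁ : ℝ)
    (v : (Fin d → ℝ) → Fin d → Fin d → ℝ) : Prop :=
  ContDiff ℝ 2 v ∧ HasCompactSupport v ∧ tsupport v ⊆ Ω ∧
    (∀ x i j, v x i j = v x j i) ∧
    (∀ x ∈ Ω, fnorm2 (v x) ≤ α₀) ∧
    (∀ x ∈ Ω, enorm2 (mdiv v x) ≤ α₁)

/-- Second-order Total Generalized Variation. -/
def TGV2 {d : ℕ} (Ω : Set (Fin d → ℝ)) (α₀ α₁ : ℝ) (u : (Fin d → ℝ) → ℝ) : ℝ≥0∞ :=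
  ⨆ (v) (_ : TGVtest Ω α₀ α₁ v), ENNReal.ofReal (∫ x in Ω, u x * mdiv2 v x)

/-- Admissible test fields for the total variation: `φ ∈ C_c¹(Ω, ℝ^d)`, `‖φ‖_∞ ≤ 1`. -/
def TVtest {d : ℕ} (Ω : Set (Fin d → ℝ)) (φ : (Fin d → ℝ) → Fin d → ℝ) : Prop :=
  ContDiff ℝ 1 φ ∧ HasCompactSupport φ ∧ tsupport φ ⊆ Ω ∧ ∀ x ∈ Ω, enorm2 (φ x) ≤ 1

/-- Divergence of a vector field. -/
def vdiv {d : ℕ} (φ : (Fin d → ℝ) → Fin d → ℝ) (x : Fin d → ℝ) : ℝ :=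
  ∑ j, pd j (fun y => φ y j) x

/-- Total variation. -/
def TVar {d : ℕ} (Ω : Set (Fin d → ℝ)) (u : (Fin d → ℝ) → ℝ) : ℝ≥0∞ :=
  ⨆ (φ) (_ : TVtest Ω φ), ENNReal.ofReal (∫ x in Ω, u x * vdiv φ x)

/-- Radon norm `‖Du - w‖_M` of the distributional derivative of `u` minus `w`. -/
def MnormDuSub {d : ℕ} (Ω : Set (Fin d → ℝ)) (u : (Fin d → ℝ) → ℝ)
    (w : (Fin d → ℝ) → Fin d → ℝ) : ℝ≥0∞ :=
  ⨆ (φ) (_ : TVtest Ω φ),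
    ENNReal.ofReal (∫ x in Ω, (u x * vdiv φ x + ∑ i, w x i * φ x i))

/-- Test fields for the Radon norm of the symmetrized derivative:
`v ∈ C_c²(Ω, S^{d×d})` with `‖v‖_∞ ≤ 1`. -/
def Etest {d : ℕ} (Ω : Set (Fin d → ℝ)) (v : (Fin d → ℝ) → Fin d → Fin d → ℝ) : Prop :=
  ContDiff ℝ 2 v ∧ HasCompactSupport v ∧ tsupport v ⊆ Ω ∧
    (∀ x i j, v x i j = v x j i) ∧ (∀ x ∈ Ω, fnorm2 (v x) ≤ 1)

/-- Radon norm `‖ℰw‖_M` of the distributional symmetrized derivative of `w`. -/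
def MnormEw {d : ℕ} (Ω : Set (Fin d → ℝ)) (w : (Fin d → ℝ) → Fin d → ℝ) : ℝ≥0∞ :=
  ⨆ (v) (_ : Etest Ω v), ENNReal.ofReal (∫ x in Ω, ∑ i, w x i * mdiv v x i)

/-! Rescaling `x ↦ r x` of the domain is dual to the rescaling `v ↦ r² v(r⁻¹ ·)` of the test
fields: the factor `r²` cancels the two factors `r⁻¹` produced by `div²` under the chain rule, so
`div²` commutes with the rescaling, while the constraints on `v` and `div v` pick up the factors
`r²` and `r`. The Jacobian `r^d` of the substitution `y = r x` in the pairing `∫ u div² v`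
then gives the factor `r^{-d}`. -/

section Rescaling

open scoped Pointwise

variable {d : ℕ}

lemma pd_const_mul (a : ℝ) (f : (Fin d → ℝ) → ℝ) (x : Fin d → ℝ) (j : Fin d) :
    pd j (fun y => a * f y) x = a * pd j f x := by
  rw [pd, show (fun y => a * f y) = a • f from rfl, fderiv_const_smul_field]
  rfl

lemma pd_comp_smul (c : ℝ) (f : (Fin d → ℝ) → ℝ) (x : Fin d → ℝ) (j : Fin d) :
    pd j (fun y => f (c • y)) x = c * pd j f (c • x) := by
  rw [pd, fderiv_comp_smul]
  rfl

lemma enorm2_smul (a : ℝ) (w : Fin d → ℝ) : enorm2 (a • w) = |a| * enorm2 w := by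
  rw [enorm2, enorm2, ← Real.sqrt_sq_eq_abs, ← Real.sqrt_mul (sq_nonneg a), Finset.mul_sum]
  simp only [Pi.smul_apply, smul_eq_mul, mul_pow]

lemma fnorm2_smul (a : ℝ) (M : Fin d → Fin d → ℝ) : fnorm2 (a • M) = |a| * fnorm2 M := by
  rw [fnorm2, fnorm2, ← Real.sqrt_sq_eq_abs, ← Real.sqrt_mul (sq_nonneg a)]
  simp only [Pi.smul_apply, smul_eq_mul, mul_pow, mul_add, Finset.mul_sum, mul_ite, mul_zero]
  ring_nf

def rescaleField (c : ℝ) (v : (Fin d → ℝ) → Fin d → Fin d → ℝ) :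
    (Fin d → ℝ) → Fin d → Fin d → ℝ :=
  fun y => c ^ 2 • v (c⁻¹ • y)

lemma rescaleField_apply (c : ℝ) (v : (Fin d → ℝ) → Fin d → Fin d → ℝ) (y : Fin d → ℝ)
    (i j : Fin d) : rescaleField c v y i j = c ^ 2 * v (c⁻¹ • y) i j :=
  rfl

lemma rescaleField_rescaleField_inv {c : ℝ} (hc : c ≠ 0)
    (v : (Fin d → ℝ) → Fin d → Fin d → ℝ) : rescaleField c (rescaleField c⁻¹ v) = v := by
  ext y i j
  simp only [rescaleField_apply, inv_inv, smul_smul, one_smul, ← mul_assoc,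
    ← mul_pow, mul_inv_cancel₀ hc, one_pow, one_mul]

lemma mdiv_rescaleField (c : ℝ) (v : (Fin d → ℝ) → Fin d → Fin d → ℝ) (x : Fin d → ℝ) :
    mdiv (rescaleField c v) x = c • mdiv v (c⁻¹ • x) := by
  ext i
  simp only [mdiv, rescaleField_apply, pd_const_mul, Pi.smul_apply, smul_eq_mul, Finset.mul_sum]
  refine Finset.sum_congr rfl fun j _ => ?_
  rw [pd_comp_smul c⁻¹ (fun z => v z i j), ← mul_assoc, sq, mul_self_mul_inv]

lemma mdiv2_rescaleField {c : ℝ} (hc : c ≠ 0) (v : (Fin d → ℝ) → Fin d → Fin d → ℝ)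
    (x : Fin d → ℝ) : mdiv2 (rescaleField c v) x = mdiv2 v (c⁻¹ • x) := by
  refine Finset.sum_congr rfl fun i _ => Finset.sum_congr rfl fun j _ => ?_
  have hpd : pd j (fun y => rescaleField c v y i j)
      = fun y => c * pd j (fun z => v z i j) (c⁻¹ • y) := by
    ext y
    simp only [rescaleField_apply]
    rw [pd_const_mul, pd_comp_smul c⁻¹ (fun z => v z i j), ← mul_assoc, sq, mul_self_mul_inv]
  rw [hpd, pd_const_mul, pd_comp_smul c⁻¹ (pd j fun z => v z i j), ← mul_assoc,
    mul_inv_cancel₀ hc, one_mul]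

lemma tsupport_rescaleField_subset (c : ℝ) (v : (Fin d → ℝ) → Fin d → Fin d → ℝ) :
    tsupport (rescaleField c v) ⊆ (c⁻¹ • ·) ⁻¹' tsupport v :=
  (tsupport_smul_subset_right (fun _ => c ^ 2) (v ∘ (c⁻¹ • ·))).trans
    (tsupport_comp_subset_preimage v (continuous_const_smul _))

lemma TGVtest.rescaleField {S : Set (Fin d → ℝ)} {α₀ α₁ c : ℝ} (hc : 0 < c)
    {v : (Fin d → ℝ) → Fin d → Fin d → ℝ} (hv : TGVtest S α₀ α₁ v) :
    TGVtest {y | c⁻¹ • y ∈ S} (α₀ * c ^ 2) (α₁ * c) (rescaleField c v) := by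
  obtain ⟨hsmooth, hcompact, hsupp, hsymm, hbound₀, hbound₁⟩ := hv
  refine ⟨(hsmooth.comp (contDiff_const_smul _)).const_smul _,
    (hcompact.comp_smul (inv_ne_zero hc.ne')).smul_left (f := fun _ => c ^ 2),
    (tsupport_rescaleField_subset c v).trans fun y hy => hsupp hy,
    fun x i j => by simp only [rescaleField_apply, hsymm], fun x hx => ?_, fun x hx => ?_⟩
  · change fnorm2 (c ^ 2 • v (c⁻¹ • x)) ≤ _
    rw [fnorm2_smul, abs_sq, mul_comm α₀]
    exact mul_le_mul_of_nonneg_left (hbound₀ _ hx) (sq_nonneg c)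
  · rw [mdiv_rescaleField, enorm2_smul, abs_of_pos hc, mul_comm α₁]
    exact mul_le_mul_of_nonneg_left (hbound₁ _ hx) hc.le

lemma setIntegral_comp_smul_mul_mdiv2 (Ω : Set (Fin d → ℝ)) (u : (Fin d → ℝ) → ℝ) {r : ℝ}
    (hr : 0 < r) (v : (Fin d → ℝ) → Fin d → Fin d → ℝ) :
    ∫ x in {x | r • x ∈ Ω}, u (r • x) * mdiv2 v x
      = (r ^ d)⁻¹ * ∫ y in Ω, u y * mdiv2 (rescaleField r v) y := by
  have hΩ : r • {x : Fin d → ℝ | r • x ∈ Ω} = Ω := by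
    ext y
    rw [Set.mem_smul_set_iff_inv_smul_mem₀ hr.ne']
    exact iff_of_eq (congrArg (· ∈ Ω) (smul_inv_smul₀ hr.ne' y))
  have h := Measure.setIntegral_comp_smul_of_pos volume
    (fun y => u y * mdiv2 (rescaleField r v) y) {x | r • x ∈ Ω} hr
  simp only [mdiv2_rescaleField hr.ne', inv_smul_smul₀ hr.ne'] at h ⊢
  rw [h, hΩ, Module.finrank_fin_fun, smul_eq_mul]

end Rescaling

theorem tgv2_scaling_general {d : ℕ} (Ω : Set (Fin d → ℝ)) (α₀ α₁ : ℝ) (u : (Fin d → ℝ) → ℝ)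
    (r : ℝ) (hr : 0 < r) :
    TGV2 {x : Fin d → ℝ | r • x ∈ Ω} α₀ α₁ (fun x => u (r • x))
      = ENNReal.ofReal ((r ^ d)⁻¹) * TGV2 Ω (α₀ * r ^ 2) (α₁ * r) u := by
  have hΩ : {y | r⁻¹ • y ∈ {x : Fin d → ℝ | r • x ∈ Ω}} = Ω := by
    ext y
    simp [smul_inv_smul₀ hr.ne']
  simp only [TGV2, ENNReal.mul_iSup, setIntegral_comp_smul_mul_mdiv2 Ω u hr,
    ENNReal.ofReal_mul (inv_nonneg.2 (pow_nonneg hr.le d))]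
  refine le_antisymm (iSup₂_le fun v hv => ?_) (iSup₂_le fun w hw => ?_)
  · exact le_iSup₂_of_le (rescaleField r v) (hΩ ▸ hv.rescaleField hr) le_rfl
  · have hv : TGVtest {x | r • x ∈ Ω} α₀ α₁ (rescaleField r⁻¹ w) := by
      have h := hw.rescaleField (inv_pos.2 hr)
      rwa [inv_inv, mul_assoc, mul_assoc, ← mul_pow, mul_inv_cancel₀ hr.ne', one_pow, mul_one,
        mul_one] at h
    exact le_iSup₂_of_le _ hv (by rw [rescaleField_rescaleField_inv hr.ne'])

/-- Scaling property of second-order TGV. -/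
theorem tgv2_scaling {d : ℕ} (hd : 1 ≤ d) (Ω : Set (Fin d → ℝ))
    (hΩo : IsOpen Ω) (hΩb : Bornology.IsBounded Ω)
    (α₀ α₁ : ℝ) (hα₀ : 0 < α₀) (hα₁ : 0 < α₁)
    (u : (Fin d → ℝ) → ℝ) (hu : LocallyIntegrableOn u Ω)
    (r : ℝ) (hr : 0 < r) :
    TGV2 {x : Fin d → ℝ | r • x ∈ Ω} α₀ α₁ (fun x => u (r • x))
      = ENNReal.ofReal ((r ^ d)⁻¹) * TGV2 Ω (α₀ * r ^ 2) (α₁ * r) u :=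
  tgv2_scaling_general Ω α₀ α₁ u r hr
end
end

section
/- Weak lower semicontinuity of second-order TGV on Lᵖ: let 1 < p < ∞ and let p' be the conjugate exponent. If (uₙ) is a sequence in Lᵖ(Ω) converging weakly to u ∈ Lᵖ(Ω), i.e., ∫_Ω uₙ g dx → ∫_Ω u g dx for every g ∈ L^{p'}(Ω), then TGV²_α(u) ≤ liminf_{n→∞} TGV²_α(uₙ) (liminf taken in [0,∞]). -/
open MeasureTheory Filter Topology
open scoped ENNReal

noncomputable section

/-! A test field `v` enters `TGV2 Ω α₀ α₁ u` only through `∫ u · div² v`, and `div² v` is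
continuous with compact support, hence lies in every `Lᵖ`. So each of these integrals is a
weakly continuous functional of `u`, and a supremum of weakly continuous functionals is weakly
lower semicontinuous. -/

theorem iSup₂_le_liminf_of_tendsto {α ι β : Type*} [CompleteLinearOrder β] [TopologicalSpace β]
    [OrderTopology β] {l : Filter α} [l.NeBot] {p : ι → Prop} {f : α → ι → β} {g : ι → β}
    (h : ∀ i, p i → Tendsto (fun n => f n i) l (𝓝 (g i))) :
    ⨆ (i) (_ : p i), g i ≤ liminf (fun n => ⨆ (i) (_ : p i), f n i) l :=
  iSup₂_le fun i hi => (h i hi).liminf_eq ▸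
    liminf_le_liminf (.of_forall fun n => le_iSup₂ (f := fun i _ => f n i) i hi)

lemma contDiff_pd {d : ℕ} {n : WithTop ℕ∞} (j : Fin d) {f : (Fin d → ℝ) → ℝ}
    (hf : ContDiff ℝ (n + 1) f) : ContDiff ℝ n (pd j f) :=
  (hf.fderiv_right le_rfl).clm_apply contDiff_const

lemma tsupport_pd_subset {d : ℕ} (j : Fin d) (f : (Fin d → ℝ) → ℝ) :
    tsupport (pd j f) ⊆ tsupport f :=
  tsupport_fderiv_apply_subset ℝ _

lemma continuous_mdiv2 {d : ℕ} {v : (Fin d → ℝ) → Fin d → Fin d → ℝ}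
    (hv : ContDiff ℝ 2 v) : Continuous (mdiv2 v) :=
  continuous_finsetSum _ fun i _ => continuous_finsetSum _ fun j _ =>
    (contDiff_pd (n := 0) i <|
      contDiff_pd (n := 1) j (contDiff_pi.mp (contDiff_pi.mp hv i) j)).continuous

lemma support_mdiv2_subset {d : ℕ} (v : (Fin d → ℝ) → Fin d → Fin d → ℝ) :
    Function.support (mdiv2 v) ⊆ tsupport v := by
  intro x hx
  by_contra hxv
  refine hx (Finset.sum_eq_zero fun i _ => Finset.sum_eq_zero fun j _ =>
    image_eq_zero_of_notMem_tsupport fun hxij => hxv ?_)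
  have hvij : tsupport (fun y => v y i j) ⊆ tsupport v :=
    tsupport_comp_subset (g := fun M : Fin d → Fin d → ℝ => M i j) rfl v
  exact ((tsupport_pd_subset i _).trans ((tsupport_pd_subset j _).trans hvij)) hxij

lemma memLp_mdiv2 {d : ℕ} {v : (Fin d → ℝ) → Fin d → Fin d → ℝ} (hv : ContDiff ℝ 2 v)
    (hvc : HasCompactSupport v) (p : ℝ≥0∞) (μ : Measure (Fin d → ℝ))
    [IsFiniteMeasureOnCompacts μ] : MemLp (mdiv2 v) p μ :=
  (continuous_mdiv2 hv).memLp_of_hasCompactSupport (hvc.mono' (support_mdiv2_subset v))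

theorem tgv2_weak_lsc_Lp_general {d : ℕ} (Ω : Set (Fin d → ℝ))
    (α₀ α₁ : ℝ)
    (q : ℝ)
    (u : ℕ → (Fin d → ℝ) → ℝ) (u₀ : (Fin d → ℝ) → ℝ)
    (hweak : ∀ g : (Fin d → ℝ) → ℝ, MemLp g (ENNReal.ofReal q) (volume.restrict Ω) →
      Tendsto (fun n => ∫ x in Ω, u n x * g x) atTop (𝓝 (∫ x in Ω, u₀ x * g x))) :
    TGV2 Ω α₀ α₁ u₀ ≤ Filter.liminf (fun n => TGV2 Ω α₀ α₁ (u n)) atTop :=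
  iSup₂_le_liminf_of_tendsto fun _ hv =>
    (ENNReal.continuous_ofReal.tendsto _).comp (hweak _ (memLp_mdiv2 hv.1 hv.2.1 _ _))

/-- Weak lower semicontinuity of second-order TGV on `Lᵖ(Ω)`, `1 < p < ∞`. -/
theorem tgv2_weak_lsc_Lp {d : ℕ} (hd : 1 ≤ d) (Ω : Set (Fin d → ℝ))
    (hΩo : IsOpen Ω) (hΩb : Bornology.IsBounded Ω)
    (α₀ α₁ : ℝ) (hα₀ : 0 < α₀) (hα₁ : 0 < α₁)
    (p q : ℝ) (hpq : Real.HolderConjugate p q)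
    (u : ℕ → (Fin d → ℝ) → ℝ) (u₀ : (Fin d → ℝ) → ℝ)
    (hu : ∀ n, MemLp (u n) (ENNReal.ofReal p) (volume.restrict Ω))
    (hu₀ : MemLp u₀ (ENNReal.ofReal p) (volume.restrict Ω))
    (hweak : ∀ g : (Fin d → ℝ) → ℝ, MemLp g (ENNReal.ofReal q) (volume.restrict Ω) →
      Tendsto (fun n => ∫ x in Ω, u n x * g x) atTop (𝓝 (∫ x in Ω, u₀ x * g x))) :
    TGV2 Ω α₀ α₁ u₀ ≤ Filter.liminf (fun n => TGV2 Ω α₀ α₁ (u n)) atTop :=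
  tgv2_weak_lsc_Lp_general Ω α₀ α₁ q u u₀ hweak

end
end
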